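/- arXiv:1612.05980 — 3 statements merged into one kernel-verified Lean document; each statement's English description precedes it below -/
import Mathlib

section
/- For every δ ≥ 0, L ≥ 1, A ≥ 0 and ε > 0 there exists R > 0 such that for any δ-hyperbolic geodesic metric space X, any (L,A)-quasi-geodesic Φ : [0,T] → X, and any finite sequence of parameters 0 = t₀ < t₁ < ⋯ < t_s = T with t_i − t_{i−1} ≥ R for all i, one has ∑_{i=1}^s d_X(Φ(t_{i−1}), Φ(t_i)) ≥ d_X(Φ(0), Φ(T)) ≥ (1 − ε) ∑_{i=1}^s d_X(Φ(t_{i−1}), Φ(t_i)). -/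
open Set

/-- `X` is a geodesic metric space: any two points are joined by a geodesic segment. -/
def GeodesicSpace (X : Type*) [MetricSpace X] : Prop :=
  ∀ x y : X, ∃ f : ℝ → X, f 0 = x ∧ f (dist x y) = y ∧
    ∀ s ∈ Icc (0 : ℝ) (dist x y), ∀ t ∈ Icc (0 : ℝ) (dist x y),
      dist (f s) (f t) = |s - t|

/-- Gromov hyperbolicity via the four-point condition. -/
def GromovHyperbolic (X : Type*) [MetricSpace X] (δ : ℝ) : Prop :=
  ∀ x y z w : X,
    dist x y + dist z w ≤ max (dist x z + dist y w) (dist x w + dist y z) + 2 * δ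

/-- `Φ` is an `(L,A)`-quasi-geodesic on the interval `[0,T]`. -/
def IsQuasiGeodesicOn {X : Type*} [MetricSpace X] (L A T : ℝ) (Φ : ℝ → X) : Prop :=
  ∀ s ∈ Icc (0 : ℝ) T, ∀ t ∈ Icc (0 : ℝ) T,
    (1 / L) * |s - t| - A ≤ dist (Φ s) (Φ t) ∧ dist (Φ s) (Φ t) ≤ L * |s - t| + A


/-!
By the Morse lemma, the Gromov product `(Φ 0 | Φ T)_{Φ v}` is bounded by a constant `K`
depending only on `δ, L, A`: the point of a geodesic `[Φ 0, Φ T]` farthest from `Φ`, at distance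
`D`, sees a detour through `Φ` of length linear in `D` staying `D`-far from it, and hyperbolicity
bounds `D` by the logarithm of that length. Applied to the pieces `Φ|[tₖ, tₖ₊₂]`, this bounds the
Gromov products `(Φ tₖ | Φ tₖ₊₂)_{Φ tₖ₊₁}`. When all steps are longer than `2(K + δ)`,
hyperbolicity propagates this bound to `(Φ t₀ | Φ tₖ₊₁)_{Φ tₖ}` by induction, so each step adds
its length to `d(Φ t₀, Φ tₖ)` up to an error `2(K + δ)`. Steps longer than `2(K + δ)/ε` make the
accumulated error at most `ε` times the total length.
-/

open Filter Asymptotics Metric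

section Arithmetic

lemma exists_forall_two_pow_le_imp_le (α β : ℝ) :
    ∃ K : ℕ, ∀ k : ℕ, (2 : ℝ) ^ k ≤ α + β * k → k ≤ K := by
  have ho : (fun k : ℕ => α + β * k) =o[atTop] fun k => (2 : ℝ) ^ k :=
    (isLittleO_const_left.2 <| Or.inr <|
        tendsto_norm_atTop_atTop.comp (tendsto_pow_atTop_atTop_of_one_lt one_lt_two)).add
      ((isLittleO_coe_const_pow_of_one_lt one_lt_two).const_mul_left β)
  obtain ⟨K, hK⟩ := eventually_atTop.1 (ho.def one_half_pos)
  refine ⟨K, fun k hk => ?_⟩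
  by_contra! hKk
  have h := hK k hKk.le
  have hpos : (0 : ℝ) < 2 ^ k := by positivity
  rw [Real.norm_eq_abs, Real.norm_eq_abs, abs_of_pos hpos] at h
  linarith [le_abs_self (α + β * k)]

lemma two_pow_clog_two_le (N : ℕ) : 2 ^ Nat.clog 2 N ≤ 2 * N + 1 := by
  rcases Nat.lt_or_ge 1 N with hN | hN
  · have hlt := Nat.pow_pred_clog_lt_self one_lt_two hN
    rw [← Nat.succ_pred_eq_of_pos (Nat.clog_pos one_lt_two hN), pow_succ]
    omega
  · simp [Nat.clog_of_right_le_one hN]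

lemma exists_bound_of_le_add_mul_clog {a b c δ : ℝ} (ha : 0 ≤ a) (hδ : 0 ≤ δ) :
    ∃ D₀ : ℝ, 0 ≤ D₀ ∧ ∀ (D : ℝ) (N : ℕ), (N : ℝ) ≤ a * D + b →
      D ≤ c + δ * Nat.clog 2 N → D ≤ D₀ := by
  obtain ⟨K, hK⟩ := exists_forall_two_pow_le_imp_le (2 * a * c + 2 * b + 1) (2 * a * δ)
  refine ⟨max 0 (c + δ * K), le_max_left _ _, fun D N hN hD => ?_⟩
  have h2N : (2 : ℝ) ^ Nat.clog 2 N ≤ 2 * N + 1 := by exact_mod_cast two_pow_clog_two_le N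
  have hk : Nat.clog 2 N ≤ K := hK _ (by nlinarith)
  have : δ * Nat.clog 2 N ≤ δ * K := by gcongr
  exact le_max_of_le_right (by linarith)

end Arithmetic

section GromovProduct

variable {X : Type*} [MetricSpace X]

noncomputable def gromovProduct (w x y : X) : ℝ := (dist w x + dist w y - dist x y) / 2

lemma gromovProduct_comm (w x y : X) : gromovProduct w x y = gromovProduct w y x := by
  simp only [gromovProduct, dist_comm x y, add_comm (dist w x)]

lemma gromovProduct_self_left (w y : X) : gromovProduct w w y = 0 := by
  simp [gromovProduct]

lemma dist_eq_sub_two_mul_gromovProduct (w x y : X) :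
    dist x y = dist w x + dist w y - 2 * gromovProduct w x y := by
  simp only [gromovProduct]; ring

lemma gromovProduct_add_gromovProduct (w x y : X) :
    gromovProduct w x y + gromovProduct y x w = dist w y := by
  simp only [gromovProduct, dist_comm y x, dist_comm y w, dist_comm x w]; ring

lemma gromovProduct_le_add_dist (w w' x y : X) :
    gromovProduct w x y ≤ gromovProduct w' x y + dist w w' := by
  simp only [gromovProduct]
  linarith [dist_triangle w w' x, dist_triangle w w' y]

lemma GromovHyperbolic.min_sub_le_gromovProduct {δ : ℝ} (hh : GromovHyperbolic X δ)
    (w x y z : X) :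
    min (gromovProduct w x y) (gromovProduct w y z) - δ ≤ gromovProduct w x z := by
  have h := hh x z y w
  rw [dist_comm z w, dist_comm y w, dist_comm x w, dist_comm z y] at h
  simp only [gromovProduct]
  rcases le_total (dist x y + dist w z) (dist w x + dist y z) with hle | hle
  · rw [max_eq_right hle] at h
    linarith [min_le_right ((dist w x + dist w y - dist x y) / 2)
      ((dist w y + dist w z - dist y z) / 2)]
  · rw [max_eq_left hle] at h
    linarith [min_le_left ((dist w x + dist w y - dist x y) / 2)
      ((dist w y + dist w z - dist y z) / 2)]

def IsGromovChain (w : X) (c : ℝ) (n : ℕ) (x y : X) : Prop :=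
  ∃ z : ℕ → X, z 0 = x ∧ z n = y ∧ ∀ i < n, c ≤ gromovProduct w (z i) (z (i + 1))

lemma GromovHyperbolic.sub_mul_le_gromovProduct_of_le_two_pow {δ c : ℝ}
    (hh : GromovHyperbolic X δ) (hδ : 0 ≤ δ) (w : X) (k : ℕ) :
    ∀ {n : ℕ} (z : ℕ → X), 1 ≤ n → n ≤ 2 ^ k →
      (∀ i < n, c ≤ gromovProduct w (z i) (z (i + 1))) →
        c - δ * k ≤ gromovProduct w (z 0) (z n) := by
  induction k with
  | zero =>
    intro n z hn hnk hz
    obtain rfl : n = 1 := by simp at hnk; omega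
    simpa using hz 0 one_pos
  | succ k ih =>
    intro n z hn hnk hz
    rcases Nat.lt_or_ge 1 n with hn1 | hn1
    · rw [pow_succ] at hnk
      have hhead := ih z (n := n / 2) (by omega) (by omega) fun i hi => hz i (by omega)
      have htail := ih (fun i => z (n / 2 + i)) (n := n - n / 2) (by omega) (by omega)
        fun i hi => by simpa [add_assoc] using hz (n / 2 + i) (by omega)
      rw [show n / 2 + (n - n / 2) = n by omega, add_zero] at htail
      have := hh.min_sub_le_gromovProduct w (z 0) (z (n / 2)) (z n)
      push_cast
      linarith [le_min hhead htail]
    · obtain rfl : n = 1 := by omega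
      have : 0 ≤ δ * (k + 1 : ℕ) := by positivity
      push_cast at this ⊢
      linarith [hz 0 one_pos]

lemma GromovHyperbolic.sub_mul_clog_le_gromovProduct {δ c : ℝ} (hh : GromovHyperbolic X δ)
    (hδ : 0 ≤ δ) {w x y : X} {n : ℕ} (hn : 1 ≤ n) (hc : IsGromovChain w c n x y) :
    c - δ * Nat.clog 2 n ≤ gromovProduct w x y := by
  obtain ⟨z, rfl, rfl, hz⟩ := hc
  exact hh.sub_mul_le_gromovProduct_of_le_two_pow hδ w _ z hn (Nat.le_pow_clog one_lt_two n) hz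

/-- The chain samples `g` at parameter steps of length at most `1`. -/
lemma isGromovChain_of_le_dist {w : X} {g : ℝ → X} {S u v ρ Λ B : ℝ} (hΛ : 0 ≤ Λ)
    (hg : ∀ a ∈ Icc 0 S, ∀ b ∈ Icc 0 S, dist (g a) (g b) ≤ Λ * |a - b| + B)
    (hfar : ∀ a ∈ Icc 0 S, ρ ≤ dist w (g a)) (hu : u ∈ Icc 0 S) (hv : v ∈ Icc 0 S) :
    IsGromovChain w (ρ - (Λ + B) / 2) (⌈|v - u|⌉₊ + 1) (g u) (g v) := by
  set n := ⌈|v - u|⌉₊ + 1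
  have hn : (0 : ℝ) < n := by positivity
  have hvu : |v - u| ≤ n := by
    simp only [n, Nat.cast_add, Nat.cast_one]; linarith [Nat.le_ceil |v - u|]
  have hmem : ∀ j ≤ n, u + (j / n : ℝ) * (v - u) ∈ Icc 0 S := fun j hj =>
    (convex_Icc 0 S).add_smul_sub_mem hu hv
      ⟨by positivity, (div_le_one hn).2 (by exact_mod_cast hj)⟩
  refine ⟨fun j => g (u + (j / n : ℝ) * (v - u)), by simp, by simp [hn.ne'], fun i hi => ?_⟩
  have hstep : dist (g (u + (i / n : ℝ) * (v - u))) (g (u + ((i + 1 : ℕ) / n : ℝ) * (v - u)))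
      ≤ Λ + B := by
    refine (hg _ (hmem i hi.le) _ (hmem (i + 1) hi)).trans ?_
    have : |u + (i / n : ℝ) * (v - u) - (u + ((i + 1 : ℕ) / n : ℝ) * (v - u))| ≤ 1 := by
      rw [show u + (i / n : ℝ) * (v - u) - (u + ((i + 1 : ℕ) / n : ℝ) * (v - u))
        = -((v - u) / n) by push_cast; field_simp; ring, abs_neg, abs_div, abs_of_pos hn]
      exact (div_le_one hn).2 hvu
    linarith [mul_le_of_le_one_right hΛ this]
  simp only [gromovProduct]
  linarith [hfar _ (hmem i hi.le), hfar _ (hmem (i + 1) hi)]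

end GromovProduct

section Geodesics

variable {X : Type*} [MetricSpace X]

def IsGeodesicSegment (f : ℝ → X) (d : ℝ) : Prop :=
  ∀ s ∈ Icc (0 : ℝ) d, ∀ t ∈ Icc (0 : ℝ) d, dist (f s) (f t) = |s - t|

namespace IsGeodesicSegment

variable {f : ℝ → X} {d a b r : ℝ}

lemma dist_eq_sub (hf : IsGeodesicSegment f d) (ha : a ∈ Icc 0 d) (hb : b ∈ Icc 0 d)
    (hab : a ≤ b) : dist (f a) (f b) = b - a := by
  rw [hf a ha b hb, abs_sub_comm, abs_of_nonneg (sub_nonneg.2 hab)]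

lemma gromovProduct_eq_zero (hf : IsGeodesicSegment f d) (ha : a ∈ Icc 0 d) (hb : b ∈ Icc 0 d)
    (har : a ≤ r) (hrb : r ≤ b) : gromovProduct (f r) (f a) (f b) = 0 := by
  have hr : r ∈ Icc 0 d := ⟨ha.1.trans har, hrb.trans hb.2⟩
  rw [gromovProduct, dist_comm (f r), hf.dist_eq_sub ha hr har, hf.dist_eq_sub hr hb hrb,
    hf.dist_eq_sub ha hb (har.trans hrb)]
  ring

lemma reverse (hf : IsGeodesicSegment f d) : IsGeodesicSegment (fun r => f (d - r)) d := by
  intro s hs t ht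
  rw [hf _ ⟨sub_nonneg.2 hs.2, by linarith [hs.1]⟩ _ ⟨sub_nonneg.2 ht.2, by linarith [ht.1]⟩,
    abs_sub_comm, sub_sub_sub_cancel_left]

lemma continuousOn (hf : IsGeodesicSegment f d) : ContinuousOn f (Icc 0 d) :=
  (LipschitzOnWith.of_dist_le_mul (K := 1) fun s hs t ht => by
    rw [hf s hs t ht, NNReal.coe_one, one_mul, Real.dist_eq]).continuousOn

lemma exists_gromovProduct_ge {r₀ : ℝ} {S : Set X} (hf : IsGeodesicSegment f d) (hf0 : f 0 ∈ S)
    (hr₀ : r₀ ∈ Icc 0 d) (hmax : IsMaxOn (fun r => infDist (f r) S) (Icc 0 d) r₀) :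
    ∃ a ∈ Icc 0 r₀, r₀ - a ≤ 2 * infDist (f r₀) S ∧ ∃ y ∈ S,
      dist (f a) y < infDist (f r₀) S + 1 ∧
        infDist (f r₀) S - 1 / 2 ≤ gromovProduct (f r₀) (f a) y := by
  set D := infDist (f r₀) S
  have h0 : (0 : ℝ) ∈ Icc 0 d := ⟨le_rfl, hr₀.1.trans hr₀.2⟩
  have hD : 0 ≤ D := infDist_nonneg
  have hle : ∀ r ∈ Icc 0 d, infDist (f r) S ≤ r := fun r hr => by
    simpa [dist_comm (f r), hf.dist_eq_sub h0 hr hr.1] using infDist_le_dist_of_mem (x := f r) hf0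
  have hDr₀ : D ≤ r₀ := hle r₀ hr₀
  set a := max (r₀ - 2 * D) 0
  have ha : a ∈ Icc 0 r₀ := ⟨le_max_right _ _, max_le (by linarith) hr₀.1⟩
  have ha' : a ∈ Icc 0 d := ⟨ha.1, ha.2.trans hr₀.2⟩
  have hfar : D + min D a ≤ r₀ - a := by
    rcases le_total (r₀ - 2 * D) 0 with h | h
    · simp only [a, max_eq_right h, min_eq_right hD]; linarith
    · simp only [a, max_eq_left h]; linarith [min_le_left D (r₀ - 2 * D)]
  obtain ⟨y, hy, hay⟩ := (infDist_lt_iff ⟨_, hf0⟩).1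
    ((le_min (hmax ha') (hle a ha')).trans_lt (lt_add_one (min D a)))
  refine ⟨a, ha, by simp only [a]; linarith [le_max_left (r₀ - 2 * D) 0], y, hy,
    hay.trans_le (by linarith [min_le_left D a]), ?_⟩
  rw [gromovProduct, dist_comm (f r₀), hf.dist_eq_sub ha' hr₀ ha.2]
  linarith [infDist_le_dist_of_mem (x := f r₀) hy]

end IsGeodesicSegment

end Geodesics

lemma exists_abs_sub_le_of_abs_sub_succ_le {u : ℕ → ℝ} {a v J : ℝ} (ha : |u 0 - a| ≤ J) :
    ∀ {m : ℕ} {b : ℝ}, |u m - b| ≤ J → (∀ j < m, |u (j + 1) - u j| ≤ J) → v ∈ Icc a b →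
      ∃ j ≤ m, |v - u j| ≤ J
  | 0, b, hb, _, hv => ⟨0, le_rfl, by
      rw [abs_le] at *; constructor <;> linarith [hv.1, hv.2]⟩
  | m + 1, b, hb, hstep, hv => by
    rcases le_or_gt v (u m) with h | h
    · obtain ⟨j, hj, hvj⟩ := exists_abs_sub_le_of_abs_sub_succ_le ha (m := m) (b := u m)
        (by simpa using (abs_nonneg _).trans ha) (fun j hj => hstep j (by omega)) ⟨hv.1, h⟩
      exact ⟨j, by omega, hvj⟩
    · refine ⟨m + 1, le_rfl, ?_⟩
      have := hstep m (by omega)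
      rw [abs_le] at *; constructor <;> linarith [hv.2]

section QuasiGeodesics

variable {X : Type*} [MetricSpace X]

namespace IsQuasiGeodesicOn

variable {L A T : ℝ} {Φ : ℝ → X}

lemma abs_sub_le (hqg : IsQuasiGeodesicOn L A T Φ) (hL : 0 < L) {s t : ℝ} (hs : s ∈ Icc 0 T)
    (ht : t ∈ Icc 0 T) : |s - t| ≤ L * (dist (Φ s) (Φ t) + A) := by
  have h := (hqg s hs t ht).1
  rw [one_div, inv_mul_eq_div, sub_le_iff_le_add, div_le_iff₀ hL] at h
  linarith

lemma le_dist_of_mul_add_le (hqg : IsQuasiGeodesicOn L A T Φ) (hL : 0 < L) {s t M : ℝ}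
    (hs : s ∈ Icc 0 T) (ht : t ∈ Icc 0 T) (h : L * (M + A) ≤ |s - t|) :
    M ≤ dist (Φ s) (Φ t) := by
  have := h.trans (hqg.abs_sub_le hL hs ht)
  rw [mul_le_mul_iff_right₀ hL] at this
  linarith

lemma comp_add (hqg : IsQuasiGeodesicOn L A T Φ) {a T' : ℝ} (ha : 0 ≤ a) (haT : a + T' ≤ T) :
    IsQuasiGeodesicOn L A T' fun u => Φ (a + u) := by
  intro s hs t ht
  have hmem : ∀ u ∈ Icc 0 T', a + u ∈ Icc 0 T := fun u hu =>
    ⟨by linarith [hu.1], by linarith [hu.2]⟩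
  simpa using hqg _ (hmem s hs) _ (hmem t ht)

/-- Sampling `f` at unit steps yields parameters `u j` of `Φ` with steps at most
`J = L (2E + 1 + A)`, and every parameter `v` is `J`-close to one of them. -/
lemma exists_dist_le_of_forall_exists_dist_le {d E : ℝ} {f : ℝ → X}
    (hqg : IsQuasiGeodesicOn L A T Φ) (hL : 0 < L) (hf : IsGeodesicSegment f d) (hd : 0 ≤ d)
    (hf0 : f 0 = Φ 0) (hfd : f d = Φ T) (hE : ∀ r ∈ Icc 0 d, ∃ u ∈ Icc 0 T, dist (f r) (Φ u) ≤ E)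
    {v : ℝ} (hv : v ∈ Icc 0 T) :
    ∃ r ∈ Icc 0 d, dist (Φ v) (f r) ≤ L * (L * (2 * E + 1 + A)) + A + E := by
  have hr : ∀ j : ℕ, min (j : ℝ) d ∈ Icc 0 d := fun j =>
    ⟨le_min j.cast_nonneg hd, min_le_right _ _⟩
  choose u hu hfu using fun j : ℕ => hE _ (hr j)
  have hT : 0 ≤ T := hv.1.trans hv.2
  have hE0 : 0 ≤ E := dist_nonneg.trans (hfu 0)
  set J := L * (2 * E + 1 + A)
  have hend : ∀ j : ℕ, ∀ t ∈ Icc 0 T, f (min (j : ℝ) d) = Φ t → |u j - t| ≤ J :=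
    fun j t ht h =>
    calc |u j - t| ≤ L * (dist (Φ (u j)) (Φ t) + A) := hqg.abs_sub_le hL (hu j) ht
        _ ≤ J := by
          refine mul_le_mul_of_nonneg_left ?_ hL.le
          rw [← h, dist_comm]
          linarith [hfu j]
  have hstep : ∀ j, |u (j + 1) - u j| ≤ J := fun j =>
    calc |u (j + 1) - u j| ≤ L * (dist (Φ (u (j + 1))) (Φ (u j)) + A) :=
          hqg.abs_sub_le hL (hu _) (hu _)
      _ ≤ J := by
        refine mul_le_mul_of_nonneg_left ?_ hL.le
        have h1 : dist (f (min ((j + 1 : ℕ) : ℝ) d)) (f (min (j : ℝ) d)) ≤ 1 := by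
          rw [hf _ (hr _) _ (hr _)]
          refine (abs_min_sub_min_le_max _ _ _ _).trans ?_
          simp
        linarith [dist_triangle4 (Φ (u (j + 1))) (f (min ((j + 1 : ℕ) : ℝ) d))
          (f (min (j : ℝ) d)) (Φ (u j)), hfu (j + 1), hfu j, dist_comm (Φ (u (j + 1)))
          (f (min ((j + 1 : ℕ) : ℝ) d))]
  obtain ⟨j, -, hj⟩ := exists_abs_sub_le_of_abs_sub_succ_le
    (hend 0 0 ⟨le_rfl, hT⟩ (by simp [min_eq_left hd, hf0])) (m := ⌈d⌉₊)
    (hend _ T ⟨hT, le_rfl⟩ (by rw [min_eq_right (Nat.le_ceil d), hfd])) (fun j _ => hstep j) hv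
  refine ⟨_, hr j, ?_⟩
  calc dist (Φ v) (f (min (j : ℝ) d))
      ≤ dist (Φ v) (Φ (u j)) + dist (Φ (u j)) (f (min (j : ℝ) d)) := dist_triangle _ _ _
    _ ≤ (L * |v - u j| + A) + E :=
        add_le_add (hqg v hv _ (hu j)).2 (by rw [dist_comm]; exact hfu j)
    _ ≤ L * J + A + E := by gcongr

end IsQuasiGeodesicOn

end QuasiGeodesics

section Morse

variable {X : Type*} [MetricSpace X]

/-- Let `f r₀` be a point of the geodesic farthest from the quasi-geodesic, at distance `D`.
Jumping from the geodesic, within `2D` on either side of `f r₀`, to the quasi-geodesic and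
following it in between gives a detour whose consecutive Gromov products at `f r₀` are about `D`,
while its two ends have Gromov product `0` there. Hyperbolicity then bounds `D` by the logarithm
of the length of the detour, which is linear in `D`. -/
lemma IsQuasiGeodesicOn.infDist_le_add_mul_clog {δ L A T d r₀ : ℝ} {Φ f : ℝ → X}
    (hh : GromovHyperbolic X δ) (hδ : 0 ≤ δ) (hL : 1 ≤ L) (hA : 0 ≤ A)
    (hqg : IsQuasiGeodesicOn L A T Φ) (hT : 0 ≤ T) (hf : IsGeodesicSegment f d)
    (hf0 : f 0 = Φ 0) (hfd : f d = Φ T) (hr₀ : r₀ ∈ Icc 0 d)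
    (hmax : IsMaxOn (fun r => infDist (f r) (Φ '' Icc 0 T)) (Icc 0 d) r₀) :
    ∃ N : ℕ, (N : ℝ) ≤ 6 * L * infDist (f r₀) (Φ '' Icc 0 T) + (L * (A + 2) + 2) ∧
      infDist (f r₀) (Φ '' Icc 0 T) ≤ (L + A) / 2 + 2 * δ + δ * Nat.clog 2 N := by
  set S := Φ '' Icc 0 T
  have hr₀' : d - r₀ ∈ Icc 0 d := ⟨sub_nonneg.2 hr₀.2, by linarith [hr₀.1]⟩
  obtain ⟨a, ha, hr₀a, _, ⟨u₁, hu₁, rfl⟩, hau₁, hgp₁⟩ :=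
    hf.exists_gromovProduct_ge (hf0 ▸ mem_image_of_mem Φ ⟨le_rfl, hT⟩) hr₀ hmax
  obtain ⟨a', ha', hr₀a', _, ⟨u₂, hu₂, rfl⟩, hau₂, hgp₂⟩ :=
    hf.reverse.exists_gromovProduct_ge (S := S)
      (by rw [sub_zero, hfd]; exact mem_image_of_mem Φ ⟨hT, le_rfl⟩) hr₀'
      (isMaxOn_iff.2 fun r hr => by
        simpa using isMaxOn_iff.1 hmax (d - r) ⟨sub_nonneg.2 hr.2, by linarith [hr.1]⟩)
  simp only [sub_sub_cancel] at hr₀a' hau₂ hgp₂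
  set D := infDist (f r₀) S
  have ha₀ : a ∈ Icc 0 d := ⟨ha.1, ha.2.trans hr₀.2⟩
  have hb₀ : d - a' ∈ Icc 0 d := ⟨by linarith [ha'.2, hr₀.1], by linarith [ha'.1]⟩
  have hL0 : 0 < L := by linarith
  set N := ⌈|u₂ - u₁|⌉₊ + 1
  have hchain : D - (L + A) / 2 - δ * Nat.clog 2 N ≤ gromovProduct (f r₀) (Φ u₁) (Φ u₂) :=
    hh.sub_mul_clog_le_gromovProduct hδ (by omega) <|
      isGromovChain_of_le_dist hL0.le (fun s hs t ht => (hqg s hs t ht).2)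
        (fun t ht => infDist_le_dist_of_mem (mem_image_of_mem Φ ht)) hu₁ hu₂
  have hsplit₁ := hh.min_sub_le_gromovProduct (f r₀) (f a) (Φ u₁) (f (d - a'))
  have hsplit₂ := hh.min_sub_le_gromovProduct (f r₀) (Φ u₁) (Φ u₂) (f (d - a'))
  rw [hf.gromovProduct_eq_zero ha₀ hb₀ ha.2 (by linarith [ha'.2])] at hsplit₁
  rw [gromovProduct_comm _ (Φ u₂)] at hsplit₂
  have hclog : 0 ≤ δ * Nat.clog 2 N := by positivity
  refine ⟨N, ?_, ?_⟩
  · have hu : |u₂ - u₁| ≤ L * (6 * D + 2 + A) := by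
      refine (hqg.abs_sub_le hL0 hu₂ hu₁).trans (mul_le_mul_of_nonneg_left ?_ hL0.le)
      have := hf.dist_eq_sub ha₀ hb₀ (by linarith [ha.2, ha'.2])
      linarith [dist_triangle4 (Φ u₂) (f (d - a')) (f a) (Φ u₁), dist_comm (Φ u₂) (f (d - a')),
        dist_comm (f (d - a')) (f a)]
    have := Nat.ceil_lt_add_one (abs_nonneg (u₂ - u₁))
    simp only [N, Nat.cast_add, Nat.cast_one]
    linarith
  · have h₂ : D - (L + A) / 2 - δ * Nat.clog 2 N - δ ≤
        gromovProduct (f r₀) (Φ u₁) (f (d - a')) :=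
      (sub_le_sub_right (le_min hchain (by linarith)) δ).trans hsplit₂
    have h₁ : D - (L + A) / 2 - δ * Nat.clog 2 N - δ - δ ≤ 0 :=
      (sub_le_sub_right (le_min (by linarith) h₂) δ).trans hsplit₁
    linarith

lemma IsQuasiGeodesicOn.gromovProduct_le {δ L A T D₀ : ℝ} {Φ : ℝ → X}
    (hgeo : GeodesicSpace X) (hh : GromovHyperbolic X δ) (hδ : 0 ≤ δ) (hL : 1 ≤ L) (hA : 0 ≤ A)
    (hqg : IsQuasiGeodesicOn L A T Φ) (hT : 0 ≤ T)
    (hD₀ : ∀ (D : ℝ) (N : ℕ), (N : ℝ) ≤ 6 * L * D + (L * (A + 2) + 2) →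
      D ≤ (L + A) / 2 + 2 * δ + δ * Nat.clog 2 N → D ≤ D₀)
    {v : ℝ} (hv : v ∈ Icc 0 T) :
    gromovProduct (Φ v) (Φ 0) (Φ T) ≤ L * (L * (2 * (D₀ + 1) + 1 + A)) + A + (D₀ + 1) := by
  obtain ⟨f, hf0, hfd, hf⟩ := hgeo (Φ 0) (Φ T)
  replace hf : IsGeodesicSegment f (dist (Φ 0) (Φ T)) := hf
  obtain ⟨r₀, hr₀, hmax⟩ := isCompact_Icc.exists_isMaxOn (nonempty_Icc.2 dist_nonneg)
    ((continuous_infDist_pt (Φ '' Icc 0 T)).comp_continuousOn hf.continuousOn)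
  obtain ⟨N, hN, hDN⟩ := hqg.infDist_le_add_mul_clog hh hδ hL hA hT hf hf0 hfd hr₀ hmax
  have hnear : ∀ r ∈ Icc 0 (dist (Φ 0) (Φ T)), ∃ u ∈ Icc 0 T, dist (f r) (Φ u) ≤ D₀ + 1 := by
    intro r hr
    obtain ⟨_, ⟨u, hu, rfl⟩, hru⟩ := (infDist_lt_iff (s := Φ '' Icc 0 T)
      ⟨Φ 0, mem_image_of_mem Φ ⟨le_rfl, hT⟩⟩).1
      ((hmax hr).trans_lt ((hD₀ _ _ hN hDN).trans_lt (lt_add_one D₀)))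
    exact ⟨u, hu, hru.le⟩
  obtain ⟨r, hr, hvr⟩ :=
    hqg.exists_dist_le_of_forall_exists_dist_le (by linarith) hf dist_nonneg hf0 hfd hnear hv
  calc gromovProduct (Φ v) (Φ 0) (Φ T)
      ≤ gromovProduct (f r) (Φ 0) (Φ T) + dist (Φ v) (f r) := gromovProduct_le_add_dist _ _ _ _
    _ = dist (Φ v) (f r) := by
      rw [← hf0, ← hfd, hf.gromovProduct_eq_zero (left_mem_Icc.2 dist_nonneg)
        (right_mem_Icc.2 dist_nonneg) hr.1 hr.2, zero_add]
    _ ≤ _ := hvr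

/-- A form of the Morse lemma. -/
theorem exists_gromovProduct_le_of_isQuasiGeodesicOn {δ L A : ℝ} (hδ : 0 ≤ δ) (hL : 1 ≤ L)
    (hA : 0 ≤ A) :
    ∃ K : ℝ, 0 ≤ K ∧ ∀ (X : Type*) [MetricSpace X], GeodesicSpace X → GromovHyperbolic X δ →
      ∀ (T : ℝ) (Φ : ℝ → X), IsQuasiGeodesicOn L A T Φ → ∀ a v b : ℝ, 0 ≤ a → a ≤ v → v ≤ b →
        b ≤ T → gromovProduct (Φ v) (Φ a) (Φ b) ≤ K := by
  obtain ⟨D₀, hD₀, hbound⟩ := exists_bound_of_le_add_mul_clog (a := 6 * L)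
    (b := L * (A + 2) + 2) (c := (L + A) / 2 + 2 * δ) (by positivity) hδ
  refine ⟨L * (L * (2 * (D₀ + 1) + 1 + A)) + A + (D₀ + 1), by positivity, ?_⟩
  intro X _ hgeo hh T Φ hqg a v b ha hav hvb hbT
  simpa using (hqg.comp_add ha (T' := b - a) (by linarith)).gromovProduct_le hgeo hh hδ hL hA
    (sub_nonneg.2 (hav.trans hvb)) hbound (v := v - a) ⟨sub_nonneg.2 hav, by linarith⟩

end Morse

section LocalToGlobal

variable {X : Type*} [MetricSpace X] {δ K : ℝ} {x : ℕ → X} {n : ℕ}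

/-- A long step from `x k` makes `x 0` and `x k` look close from `x (k + 1)`, so by the
four-point condition `x 0` inherits the smallness of the local product at `x (k + 1)`. -/
lemma GromovHyperbolic.gromovProduct_zero_succ_le (hh : GromovHyperbolic X δ) (hKδ : 0 ≤ K + δ)
    (hgp : ∀ k < n, gromovProduct (x (k + 1)) (x k) (x (k + 2)) ≤ K)
    (hlong : ∀ k < n, 2 * (K + δ) < dist (x k) (x (k + 1))) :
    ∀ k ≤ n, gromovProduct (x k) (x 0) (x (k + 1)) ≤ K + δ
  | 0, _ => by rwa [gromovProduct_self_left]
  | k + 1, hk => by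
    have ih := gromovProduct_zero_succ_le hh hKδ hgp hlong k (by omega)
    have hfar : K + δ < gromovProduct (x (k + 1)) (x k) (x 0) := by
      have := gromovProduct_add_gromovProduct (x (k + 1)) (x 0) (x k)
      rw [gromovProduct_comm, dist_comm] at this
      linarith [hlong k (by omega)]
    by_contra! hnear
    linarith [lt_min hfar hnear, hgp k (by omega),
      hh.min_sub_le_gromovProduct (x (k + 1)) (x k) (x 0) (x (k + 2))]

lemma GromovHyperbolic.sum_dist_le_dist_add (hh : GromovHyperbolic X δ) (hKδ : 0 ≤ K + δ)
    (hgp : ∀ k < n, gromovProduct (x (k + 1)) (x k) (x (k + 2)) ≤ K)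
    (hlong : ∀ k < n, 2 * (K + δ) < dist (x k) (x (k + 1))) :
    ∀ k ≤ n, ∑ i ∈ Finset.range (k + 1), dist (x i) (x (i + 1)) ≤
      dist (x 0) (x (k + 1)) + 2 * k * (K + δ)
  | 0, _ => by simp
  | k + 1, hk => by
    rw [Finset.sum_range_succ]
    have ih := sum_dist_le_dist_add hh hKδ hgp hlong k (by omega)
    have hgp' := hh.gromovProduct_zero_succ_le hKδ hgp hlong (k + 1) hk
    have := dist_eq_sub_two_mul_gromovProduct (x (k + 1)) (x 0) (x (k + 2))
    rw [dist_comm (x (k + 1)) (x 0)] at this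
    push_cast
    linarith

lemma GromovHyperbolic.one_sub_mul_sum_dist_le {ε : ℝ} (hh : GromovHyperbolic X δ)
    (hKδ : 0 ≤ K + δ) (hε : 0 < ε)
    (hgp : ∀ k < n, gromovProduct (x (k + 1)) (x k) (x (k + 2)) ≤ K)
    (hlong : ∀ k ≤ n, 2 * (K + δ) * (ε⁻¹ + 1) < dist (x k) (x (k + 1))) :
    (1 - ε) * ∑ i ∈ Finset.range (n + 1), dist (x i) (x (i + 1)) ≤ dist (x 0) (x (n + 1)) := by
  have hle : 2 * (K + δ) ≤ 2 * (K + δ) * (ε⁻¹ + 1) := by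
    nlinarith [inv_pos.2 hε]
  have hsum := hh.sum_dist_le_dist_add hKδ hgp
    (fun k hk => by linarith [hlong k hk.le, hle]) n le_rfl
  have hcard := Finset.card_nsmul_le_sum (Finset.range (n + 1)) (fun i => dist (x i) (x (i + 1)))
    (2 * (K + δ) * ε⁻¹) fun i hi => by
      linarith [hlong i (Nat.lt_succ_iff.1 (Finset.mem_range.1 hi)), hKδ]
  rw [Finset.card_range, nsmul_eq_mul, Nat.cast_add_one] at hcard
  have hεsum : 2 * (n + 1) * (K + δ) ≤ ε * ∑ i ∈ Finset.range (n + 1), dist (x i) (x (i + 1)) := by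
    have := mul_le_mul_of_nonneg_left hcard hε.le
    rwa [show ε * ((n + 1) * (2 * (K + δ) * ε⁻¹)) = 2 * (n + 1) * (K + δ) by
      field_simp] at this
  linarith

end LocalToGlobal

/-- For all δ ≥ 0, L ≥ 1, A ≥ 0, ε > 0 there is R > 0 such that for any δ-hyperbolic
geodesic space, any (L,A)-quasi-geodesic Φ : [0,T] → X and any partition
0 = t₀ < t₁ < ⋯ < t_s = T with gaps at least R, the sum of the distances between
consecutive points approximates the distance between the endpoints up to factor 1-ε. -/
theorem stmt0 (δ L A ε : ℝ) (hδ : 0 ≤ δ) (hL : 1 ≤ L) (hA : 0 ≤ A) (hε : 0 < ε) :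
    ∃ R : ℝ, 0 < R ∧
      ∀ (X : Type) [MetricSpace X], GeodesicSpace X → GromovHyperbolic X δ →
        ∀ (T : ℝ) (Φ : ℝ → X), IsQuasiGeodesicOn L A T Φ →
          ∀ (s : ℕ) (t : ℕ → ℝ), 0 < s → t 0 = 0 → t s = T →
            (∀ i : ℕ, i < s → t i < t (i + 1)) →
            (∀ i : ℕ, i < s → R ≤ t (i + 1) - t i) →
            (∀ i : ℕ, i ≤ s → t i ∈ Icc (0 : ℝ) T) →
            dist (Φ 0) (Φ T) ≤ ∑ i ∈ Finset.range s, dist (Φ (t i)) (Φ (t (i + 1))) ∧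
            (1 - ε) * ∑ i ∈ Finset.range s, dist (Φ (t i)) (Φ (t (i + 1))) ≤
              dist (Φ 0) (Φ T) := by
  obtain ⟨K, hK, hmorse⟩ := exists_gromovProduct_le_of_isQuasiGeodesicOn hδ hL hA
  have hL0 : 0 < L := by linarith
  have hpos : 0 ≤ 2 * (K + δ) * (ε⁻¹ + 1) := by positivity
  refine ⟨L * (2 * (K + δ) * (ε⁻¹ + 1) + 1 + A), by positivity, ?_⟩
  intro X _ hgeo hh T Φ hqg s t hs ht0 hts hlt hgap hmem
  obtain ⟨n, rfl⟩ : ∃ n, s = n + 1 := ⟨s - 1, by omega⟩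
  have hlong : ∀ k ≤ n, 2 * (K + δ) * (ε⁻¹ + 1) < dist (Φ (t k)) (Φ (t (k + 1))) := fun k hk =>
    lt_add_one _ |>.trans_le <| hqg.le_dist_of_mul_add_le hL0 (hmem k (by omega))
      (hmem (k + 1) (by omega)) <| by
        rw [abs_sub_comm, abs_of_pos (sub_pos.2 (hlt k (by omega)))]
        exact hgap k (by omega)
  have htriple : ∀ k < n, gromovProduct (Φ (t (k + 1))) (Φ (t k)) (Φ (t (k + 2))) ≤ K :=
    fun k hk => hmorse X hgeo hh T Φ hqg _ _ _ (hmem k (by omega)).1 (hlt k (by omega)).le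
      (hlt (k + 1) (by omega)).le (hmem (k + 2) (by omega)).2
  have hdist : dist (Φ 0) (Φ T) = dist (Φ (t 0)) (Φ (t (n + 1))) := by rw [ht0, hts]
  exact ⟨hdist ▸ dist_le_range_sum_dist (fun i => Φ (t i)) (n + 1),
    hdist ▸ hh.one_sub_mul_sum_dist_le (x := fun i => Φ (t i)) (by linarith) hε htriple hlong⟩
end

section
/- Let X be a δ-hyperbolic geodesic metric space. For every ε > 0 there exists L(ε) > 0 such that for every isometry γ : X → X with ℓ_X(γ) ≥ L(ε), one has ℓ_X(γ) ≥ ‖γ‖_X ≥ (1 − ε)·ℓ_X(γ), where ℓ_X(γ) = inf_{x∈X} d_X(x, γ(x)) is the translation length and ‖γ‖_X = lim_{n→∞} (1/n)·inf_{x∈X} d_X(x, γⁿ(x)) is the stable translation length. (Assume the infimum defining ℓ_X(γ) is attained at some point x₀.) -/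
open Set Filter Topology

/-- In a δ-hyperbolic geodesic space, for every ε > 0 there is L(ε) > 0 (depending only on δ
and ε) such that every isometry γ whose translation length ℓ = inf_x d(x, γx) is attained and
satisfies ℓ ≥ L(ε) has stable translation length between (1-ε)·ℓ and ℓ. -/
theorem stmt2 (δ ε : ℝ) (hδ : 0 ≤ δ) (hε : 0 < ε) :
    ∃ Lε : ℝ, 0 < Lε ∧
      ∀ (X : Type) [MetricSpace X], GeodesicSpace X → GromovHyperbolic X δ →
        ∀ (γ : X → X), Isometry γ →
          (∃ x₀ : X, dist x₀ (γ x₀) = ⨅ x : X, dist x (γ x)) →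
          Lε ≤ ⨅ x : X, dist x (γ x) →
          ∀ s : ℝ,
            Tendsto (fun n : ℕ => (⨅ x : X, dist x (γ^[n] x)) / n) atTop (𝓝 s) →
            s ≤ (⨅ x : X, dist x (γ x)) ∧ (1 - ε) * (⨅ x : X, dist x (γ x)) ≤ s := by
  refine ⟨4 * δ / ε + 4 * δ + 1, by positivity, ?_⟩
  intro X _ hgeo hhyp γ hiso hmin hL s hs
  obtain ⟨x₀, hx₀⟩ := hmin
  haveI : Nonempty X := ⟨x₀⟩
  set ℓ : ℝ := ⨅ x : X, dist x (γ x) with hℓdef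
  have hδε : (0:ℝ) ≤ 4 * δ / ε := by positivity
  have hℓ4δ : 4 * δ < ℓ := by linarith
  have hℓpos : 0 < ℓ := by linarith
  -- iterates are isometries
  have hdit : ∀ (i : ℕ) (a b : X), dist (γ^[i] a) (γ^[i] b) = dist a b := by
    intro i
    induction i with
    | zero => simp
    | succ i ih =>
      intro a b
      simp only [Function.iterate_succ_apply', hiso.dist_eq]
      exact ih a b
  have hbdd : ∀ k : ℕ, BddBelow (Set.range fun x : X => dist x (γ^[k] x)) := by
    intro k
    exact ⟨0, by rintro _ ⟨x, rfl⟩; exact dist_nonneg⟩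
  -- the midpoint
  obtain ⟨f, hf0, hf1, hfd⟩ := hgeo x₀ (γ x₀)
  have hdx₀ : dist x₀ (γ x₀) = ℓ := hx₀
  set m : X := f (ℓ / 2) with hm
  have hmem0 : (0:ℝ) ∈ Icc (0:ℝ) (dist x₀ (γ x₀)) := by
    constructor <;> simp [hdx₀]; linarith
  have hmemh : ℓ / 2 ∈ Icc (0:ℝ) (dist x₀ (γ x₀)) := by
    rw [hdx₀]; constructor <;> linarith
  have hmem1 : dist x₀ (γ x₀) ∈ Icc (0:ℝ) (dist x₀ (γ x₀)) := by
    exact ⟨dist_nonneg, le_refl _⟩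
  have hd0m : dist x₀ m = ℓ / 2 := by
    have := hfd 0 hmem0 (ℓ / 2) hmemh
    rw [hf0] at this
    rw [this]; rw [abs_of_nonpos (by linarith)]; ring
  have hdm1 : dist m (γ x₀) = ℓ / 2 := by
    have := hfd (ℓ / 2) hmemh (dist x₀ (γ x₀)) hmem1
    rw [hf1] at this
    rw [this, hdx₀, abs_of_nonpos (by linarith)]; ring
  -- m also has displacement exactly ℓ
  have hdmm : dist m (γ m) = ℓ := by
    have h1 : ℓ ≤ dist m (γ m) := by
      rw [hℓdef]
      exact ciInf_le (hbdd 1 |>.mono (by intro y hy; simpa using hy)) m |>.trans_eq (by simp)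
    have h2 : dist m (γ m) ≤ ℓ := by
      calc dist m (γ m) ≤ dist m (γ x₀) + dist (γ x₀) (γ m) := dist_triangle _ _ _
        _ = ℓ / 2 + dist x₀ m := by rw [hdm1, hiso.dist_eq]
        _ = ℓ := by rw [hd0m]; ring
    linarith
  -- the chain
  set c : ℕ → X := fun j => γ^[(j + 1) / 2] (if j % 2 = 0 then m else x₀) with hc
  have hc0 : c 0 = m := by simp [hc]
  have hceven : ∀ i : ℕ, c (2 * i) = γ^[i] m := by
    intro i
    have h1 : (2 * i + 1) / 2 = i := by omega
    have h2 : (2 * i) % 2 = 0 := by omega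
    simp [hc, h1, h2]
  have hcodd : ∀ i : ℕ, c (2 * i + 1) = γ^[i + 1] x₀ := by
    intro i
    have h1 : (2 * i + 1 + 1) / 2 = i + 1 := by omega
    have h2 : (2 * i + 1) % 2 = 1 := by omega
    simp [hc, h1, h2]
  have hstep : ∀ j : ℕ, dist (c j) (c (j + 1)) = ℓ / 2 := by
    intro j
    rcases Nat.even_or_odd j with ⟨i, hi⟩ | ⟨i, hi⟩
    · subst hi
      rw [show i + i = 2 * i by ring, hceven, hcodd,
        Function.iterate_succ_apply, hdit, hdm1]
    · subst hi
      rw [show 2 * i + 1 + 1 = 2 * (i + 1) by ring, hcodd, hceven, hdit, hd0m]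
  have hgap : ∀ j : ℕ, dist (c j) (c (j + 2)) = ℓ := by
    intro j
    rcases Nat.even_or_odd j with ⟨i, hi⟩ | ⟨i, hi⟩
    · subst hi
      rw [show i + i = 2 * i by ring, show 2 * i + 2 = 2 * (i + 1) by ring,
        hceven, hceven, show γ^[i + 1] m = γ^[i] (γ m) from Function.iterate_succ_apply γ i m,
        hdit, hdmm]
    · subst hi
      rw [show 2 * i + 1 + 2 = 2 * (i + 1) + 1 by ring, hcodd, hcodd,
        show γ^[i + 1 + 1] x₀ = γ^[i + 1] (γ x₀) from Function.iterate_succ_apply γ (i + 1) x₀,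
        hdit, hdx₀]
  -- key induction
  have hkey : ∀ j : ℕ, dist m (c j) + (ℓ / 2 - 2 * δ) ≤ dist m (c (j + 1)) := by
    intro j
    induction j with
    | zero =>
      rw [hc0, show c 1 = γ^[1] x₀ from hcodd 0]
      simp only [Function.iterate_one, dist_self]
      rw [hdm1]
      linarith
    | succ j ih =>
      have h4 := hhyp m (c (j + 1)) (c (j + 2)) (c j)
      rw [dist_comm (c (j+2)) (c j), hgap j,
        dist_comm (c (j+1)) (c j), hstep j, hstep (j+1)] at h4
      rcases max_cases (dist m (c (j + 2)) + ℓ / 2) (dist m (c j) + ℓ / 2) with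
        ⟨hmax, _⟩ | ⟨hmax, _⟩ <;> rw [hmax] at h4 <;> linarith
  have hlin : ∀ j : ℕ, (j : ℝ) * (ℓ / 2 - 2 * δ) ≤ dist m (c j) := by
    intro j
    induction j with
    | zero => simpa using dist_nonneg
    | succ j ih =>
      have := hkey j
      push_cast
      linarith
  have hmN : ∀ N : ℕ, (N : ℝ) * (ℓ - 4 * δ) ≤ dist m (γ^[N] m) := by
    intro N
    have := hlin (2 * N)
    rw [hceven N] at this
    push_cast at this
    linarith [this]
  -- lower bound on displacement of any point under γ^[k]
  have htri : ∀ (x : X) (k n : ℕ), dist x (γ^[n * k] x) ≤ (n : ℝ) * dist x (γ^[k] x) := by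
    intro x k n
    induction n with
    | zero => simp
    | succ n ih =>
      have : γ^[(n + 1) * k] x = γ^[k] (γ^[n * k] x) := by
        rw [show (n + 1) * k = k + n * k by ring, Function.iterate_add_apply]
      rw [this]
      push_cast
      calc dist x (γ^[k] (γ^[n * k] x))
          ≤ dist x (γ^[k] x) + dist (γ^[k] x) (γ^[k] (γ^[n * k] x)) := dist_triangle _ _ _
        _ = dist x (γ^[k] x) + dist x (γ^[n * k] x) := by rw [hdit]
        _ ≤ dist x (γ^[k] x) + (n : ℝ) * dist x (γ^[k] x) := by linarith
        _ = ((n : ℝ) + 1) * dist x (γ^[k] x) := by ring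
  have hlow : ∀ (x : X) (k : ℕ), (k : ℝ) * (ℓ - 4 * δ) ≤ dist x (γ^[k] x) := by
    intro x k
    have hbound : ∀ n : ℕ, 1 ≤ n →
        (k : ℝ) * (ℓ - 4 * δ) - 2 * dist m x / n ≤ dist x (γ^[k] x) := by
      intro n hn
      have hnpos : (0:ℝ) < n := by exact_mod_cast hn
      have h1 : dist m (γ^[n * k] m) ≤ 2 * dist m x + dist x (γ^[n * k] x) := by
        calc dist m (γ^[n * k] m)
            ≤ dist m x + dist x (γ^[n * k] x) + dist (γ^[n * k] x) (γ^[n * k] m) := by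
              linarith [dist_triangle4 m x (γ^[n * k] x) (γ^[n * k] m)]
          _ = 2 * dist m x + dist x (γ^[n * k] x) := by rw [hdit, dist_comm x m]; ring
      have h2 := hmN (n * k)
      have h3 := htri x k n
      have : (n : ℝ) * ((k : ℝ) * (ℓ - 4 * δ)) ≤ 2 * dist m x + (n : ℝ) * dist x (γ^[k] x) := by
        push_cast at h2 ⊢
        nlinarith
      have h5 : 2 * dist m x / (n : ℝ) * n = 2 * dist m x :=
        div_mul_cancel₀ _ (ne_of_gt hnpos)
      nlinarith [this, h5, hnpos]
    have htend : Tendsto (fun n : ℕ => (k : ℝ) * (ℓ - 4 * δ) - 2 * dist m x / n) atTop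
        (𝓝 ((k : ℝ) * (ℓ - 4 * δ) - 0)) :=
      tendsto_const_nhds.sub (tendsto_const_div_atTop_nhds_zero_nat _)
    rw [sub_zero] at htend
    exact le_of_tendsto htend ((eventually_ge_atTop 1).mono hbound)
  -- bounds on the sequence
  have hseq : ∀ k : ℕ, 1 ≤ k →
      ℓ - 4 * δ ≤ (⨅ x : X, dist x (γ^[k] x)) / k ∧ (⨅ x : X, dist x (γ^[k] x)) / k ≤ ℓ := by
    intro k hk
    have hkpos : (0:ℝ) < k := by exact_mod_cast hk
    constructor
    · rw [le_div_iff₀ hkpos]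
      refine le_ciInf fun x => ?_
      have := hlow x k
      linarith
    · rw [div_le_iff₀ hkpos]
      have h1 : (⨅ x : X, dist x (γ^[k] x)) ≤ dist x₀ (γ^[k] x₀) := ciInf_le (hbdd k) x₀
      have h2 : dist x₀ (γ^[k] x₀) ≤ (k : ℝ) * dist x₀ (γ x₀) := by
        have := htri x₀ 1 k
        simpa using this
      rw [hdx₀] at h2
      linarith [mul_comm (k : ℝ) ℓ ▸ h2]
  have hub : s ≤ ℓ :=
    le_of_tendsto hs ((eventually_ge_atTop 1).mono fun k hk => (hseq k hk).2)
  have hlb : ℓ - 4 * δ ≤ s :=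
    ge_of_tendsto hs ((eventually_ge_atTop 1).mono fun k hk => (hseq k hk).1)
  refine ⟨hub, ?_⟩
  -- (1-ε)ℓ ≤ ℓ - 4δ since εℓ ≥ 4δ
  have h4δ : 4 * δ ≤ ε * ℓ := by
    have h1 : ε * (4 * δ / ε + 4 * δ + 1) ≤ ε * ℓ :=
      mul_le_mul_of_nonneg_left hL hε.le
    have h2 : ε * (4 * δ / ε) = 4 * δ := by field_simp
    nlinarith
  nlinarith
end

section
/- With the notation of the previous statement, the quantity (1/(5n))·ℓ_S(a^{5n} b) converges to 1/5 as n → ∞, while ℓ_S(a) = 1; hence there is no function on the space ℝ₊-weighted conjugacy classes that is simultaneously homogeneous, extends ℓ_S on conjugacy classes, and is continuous with respect to a topology in which (1/(5n))·[a^{5n}b] converges to [a]. -/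
/-!
The homomorphism `χ : F → ℤ` with `χ a = 1`, `χ b = 5` takes values of absolute value at most `5`
on `S`, so `|χ g| ≤ 5 ℓS g`. Since `χ (a ^ (5 * n) * b) = 5 * n + 5`, the word `(a⁵)ⁿ b` of
length `n + 1` is optimal, and `ℓS (a ^ (5 * n) * b) / (5 * n) = (n + 1) / (5 * n) → 1 / 5`.
The same bound gives `ℓS a ≥ 1 / 5`, hence `ℓS a = 1`.
-/

open Filter Topology

namespace Stmt9

abbrev F := FreeGroup (Fin 2)

def a : F := FreeGroup.of 0
def b : F := FreeGroup.of 1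

/-- The symmetric generating set S = {a, b, a⁵, a⁻¹, b⁻¹, a⁻⁵}. -/
def S : Set F := {a, b, a ^ 5, a⁻¹, b⁻¹, (a ^ 5)⁻¹}

/-- Word length with respect to S. -/
noncomputable def ℓS (g : F) : ℕ :=
  sInf {k : ℕ | ∃ l : List F, l.length = k ∧ (∀ x ∈ l, x ∈ S) ∧ g = l.prod}

lemma abs_toAdd_prod_le {G : Type*} [Monoid G] (f : G →* Multiplicative ℤ) {T : Set G} {C : ℤ}
    (hC : ∀ x ∈ T, |(f x).toAdd| ≤ C) (l : List G) (hl : ∀ x ∈ l, x ∈ T) :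
    |(f l.prod).toAdd| ≤ C * l.length := by
  induction l with
  | nil => simp
  | cons x xs ih =>
    have hx := hC x (hl x List.mem_cons_self)
    have hxs := ih fun y hy => hl y (List.mem_cons_of_mem x hy)
    calc |(f (x :: xs).prod).toAdd| = |(f x).toAdd + (f xs.prod).toAdd| := by simp
      _ ≤ |(f x).toAdd| + |(f xs.prod).toAdd| := abs_add_le _ _
      _ ≤ C * (x :: xs).length := by push_cast [List.length_cons]; linarith

lemma exists_list_mem_S_prod_eq (g : F) : ∃ l : List F, (∀ x ∈ l, x ∈ S) ∧ g = l.prod := by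
  have of_mem_S (i : Fin 2) : FreeGroup.of i ∈ S ∧ (FreeGroup.of i)⁻¹ ∈ S := by
    fin_cases i <;> simp [S, a, b]
  induction g using FreeGroup.induction_on with
  | C1 => exact ⟨[], by simp, by simp⟩
  | of i => exact ⟨[FreeGroup.of i], by simpa using (of_mem_S i).1, by simp⟩
  | inv_of i _ => exact ⟨[(FreeGroup.of i)⁻¹], by simpa using (of_mem_S i).2, by simp⟩
  | mul g h hg hh =>
    obtain ⟨l, hlS, rfl⟩ := hg
    obtain ⟨m, hmS, rfl⟩ := hh
    exact ⟨l ++ m, fun x hx => (List.mem_append.1 hx).elim (hlS x) (hmS x), List.prod_append.symm⟩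

lemma ℓS_le {g : F} (l : List F) (hlS : ∀ x ∈ l, x ∈ S) (hg : g = l.prod) : ℓS g ≤ l.length :=
  Nat.sInf_le ⟨l, rfl, hlS, hg⟩

lemma exists_list_length_eq_ℓS (g : F) :
    ∃ l : List F, l.length = ℓS g ∧ (∀ x ∈ l, x ∈ S) ∧ g = l.prod := by
  obtain ⟨l, hlS, hg⟩ := exists_list_mem_S_prod_eq g
  exact Nat.sInf_mem (s := {k | ∃ l : List F, l.length = k ∧ (∀ x ∈ l, x ∈ S) ∧ g = l.prod})
    ⟨l.length, l, rfl, hlS, hg⟩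

def χ : F →* Multiplicative ℤ :=
  FreeGroup.lift fun i => Multiplicative.ofAdd (![1, 5] i)

lemma toAdd_χ_a : (χ a).toAdd = 1 := by simp [χ, a]

lemma toAdd_χ_b : (χ b).toAdd = 5 := by simp [χ, b]

lemma abs_toAdd_χ_le_of_mem_S {x : F} (hx : x ∈ S) : |(χ x).toAdd| ≤ 5 := by
  simp only [S, Set.mem_insert_iff, Set.mem_singleton_iff] at hx
  rcases hx with rfl | rfl | rfl | rfl | rfl | rfl <;> simp [toAdd_χ_a, toAdd_χ_b]

lemma abs_toAdd_χ_le_five_mul_ℓS (g : F) : |(χ g).toAdd| ≤ 5 * ℓS g := by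
  obtain ⟨l, hl, hlS, rfl⟩ := exists_list_length_eq_ℓS g
  rw [← hl]
  exact abs_toAdd_prod_le χ (fun _ => abs_toAdd_χ_le_of_mem_S) l hlS

lemma ℓS_a_pow_mul_b (n : ℕ) : ℓS (a ^ (5 * n) * b) = n + 1 := by
  apply le_antisymm
  · have hword : a ^ (5 * n) * b = (List.replicate n (a ^ 5) ++ [b]).prod := by
      simp [List.prod_replicate, ← pow_mul, mul_comm 5 n]
    have hmem : ∀ x ∈ List.replicate n (a ^ 5) ++ [b], x ∈ S := by
      simp only [List.mem_append, List.mem_replicate, List.mem_singleton]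
      rintro x (⟨-, rfl⟩ | rfl) <;> simp [S]
    simpa using ℓS_le _ hmem hword
  · have hχ : (χ (a ^ (5 * n) * b)).toAdd = 5 * n + 5 := by
      simp [toAdd_χ_a, toAdd_χ_b]
    have := abs_toAdd_χ_le_five_mul_ℓS (a ^ (5 * n) * b)
    rw [hχ, abs_of_nonneg (by positivity)] at this
    omega

lemma ℓS_a : ℓS a = 1 := by
  apply le_antisymm
  · simpa using ℓS_le [a] (by simp [S]) (by simp)
  · have := abs_toAdd_χ_le_five_mul_ℓS a
    rw [toAdd_χ_a, abs_one] at this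
    omega

lemma tendsto_add_one_div_five_mul :
    Tendsto (fun n : ℕ => ((n : ℝ) + 1) / (5 * n)) atTop (𝓝 (1 / 5)) := by
  have h : ∀ᶠ n : ℕ in atTop, ((n : ℝ) + 1) / (5 * n) = 1 / 5 + (1 / 5) / n := by
    filter_upwards [eventually_ne_atTop 0] with n hn
    field_simp
  rw [tendsto_congr' h]
  simpa using tendsto_const_nhds.add (tendsto_const_div_atTop_nhds_zero_nat (1 / 5 : ℝ))

/-- `ℓS(a^{5n} b)/(5n) → 1/5` while `ℓS(a) = 1`; so no homogeneous continuous extension of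
`ℓS` to currents can exist. -/
theorem stmt9 :
    Tendsto (fun n : ℕ => (ℓS (a ^ (5 * n) * b) : ℝ) / (5 * n)) atTop (𝓝 (1 / 5)) ∧
    ℓS a = 1 := by
  refine ⟨?_, ℓS_a⟩
  simpa only [ℓS_a_pow_mul_b, Nat.cast_add, Nat.cast_one] using tendsto_add_one_div_five_mul

end Stmt9
end
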